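/- For any positive integer r, the Gauss sum of the quadratic form q(x₁,x₂) = (x₁² + x₁x₂ + x₂²)/2^r on (ℤ/2^rℤ)² equals (−1)^r. -/

import Mathlib

/-!
With `e_r(n) = exp(2πi n / 2^r)` and `S(r) = ∑_{x,y < 2^r} e_r(x² + xy + y²)`, the Gauss sum is
`S(r) / 2^r`, so it suffices to show `S(r) = (-2)^r`. With `M = 2^(r+1)`, shifting `x` or `y`
by `M` multiplies `e_{r+2}(x² + xy + y²)` by `(-1)^y` or `(-1)^x`, so in `S(r+2)` the four
translates of `[0, M)²` add up to `(1 + (-1)^x)(1 + (-1)^y)` times the sum over `[0, M)²`.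
Only even `x` and `y` survive, and `e_{r+2}(4n) = e_r(n)`, so `S(r+2) = 4 S(r)`; together with
`S(0) = 1` and `S(1) = -2` this gives `S(r) = (-2)^r`.
-/

noncomputable def qzExp (x : AddCircle (1 : ℚ)) : ℂ :=
  Complex.exp (2 * Real.pi * Complex.I * ((Quotient.out x : ℚ) : ℂ))

noncomputable def gSum (G : Type*) [AddCommGroup G] (q : G → AddCircle (1 : ℚ)) : ℂ :=
  (1 / Real.sqrt (Nat.card G)) * ∑ᶠ x : G, qzExp (q x)

open Finset Complex

lemma sum_range_two_mul {M : Type*} [AddCommMonoid M] (f : ℕ → M) (N : ℕ) :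
    ∑ x ∈ range (2 * N), f x = ∑ x ∈ range N, (f x + f (x + N)) := by
  rw [two_mul, sum_range_add, sum_add_distrib]
  simp only [add_comm N]

section

variable {R : Type*} [CommRing R]

lemma sum_range_two_mul_mul_one_add_neg_one_pow (f : ℕ → R) (N : ℕ) :
    ∑ x ∈ range (2 * N), f x * (1 + (-1) ^ x) = 2 * ∑ a ∈ range N, f (2 * a) := by
  induction N with
  | zero => simp
  | succ n ih =>
    rw [mul_add_one, sum_range_succ, sum_range_succ, ih, sum_range_succ, pow_succ, pow_mul]
    norm_num
    ring

lemma sum_sum_range_two_mul_mul_one_add_neg_one_pow (g : ℕ → ℕ → R) (N : ℕ) :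
    ∑ x ∈ range (2 * N), ∑ y ∈ range (2 * N), g x y * (1 + (-1) ^ y) * (1 + (-1) ^ x)
      = 4 * ∑ a ∈ range N, ∑ b ∈ range N, g (2 * a) (2 * b) := by
  simp only [← sum_mul, sum_range_two_mul_mul_one_add_neg_one_pow, ← mul_sum, ← mul_assoc]
  norm_num

end

lemma ZMod.sum_val_eq_sum_range {M : Type*} [AddCommMonoid M] (n : ℕ) [NeZero n] (f : ℕ → M) :
    ∑ x : ZMod n, f x.val = ∑ i ∈ range n, f i := by
  exact sum_nbij' ZMod.val (↑) (fun a _ => mem_range.mpr (ZMod.val_lt a))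
    (fun _ _ => mem_univ _) (fun a _ => ZMod.natCast_zmod_val a)
    (fun i hi => ZMod.val_cast_of_lt (mem_range.mp hi)) (fun _ _ => rfl)

namespace EisensteinGaussSum

noncomputable def e (r n : ℕ) : ℂ := exp (2 * Real.pi * I * n / 2 ^ r)

lemma e_add (r a b : ℕ) : e r (a + b) = e r a * e r b := by
  rw [e, e, e, ← exp_add]; congr 1; push_cast; ring

lemma e_two_pow_mul (r k : ℕ) : e (r + 1) (2 ^ r * k) = (-1) ^ k := by
  rw [e, ← exp_pi_mul_I, ← exp_nat_mul]
  congr 1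
  push_cast
  field_simp
  ring

lemma e_one (k : ℕ) : e 1 k = (-1) ^ k := by
  simpa using e_two_pow_mul 0 k

lemma e_four_mul (r n : ℕ) : e (r + 2) (4 * n) = e r n := by
  rw [e, e]
  congr 1
  push_cast
  field_simp
  ring

def normForm (x y : ℕ) : ℕ := x ^ 2 + x * y + y ^ 2

lemma e_normForm_shift (r x y a b : ℕ) :
    e (r + 2) (normForm (x + 2 ^ (r + 1) * a) (y + 2 ^ (r + 1) * b))
      = e (r + 2) (normForm x y) * (-1) ^ (a * y + b * x) := by
  have h : normForm (x + 2 ^ (r + 1) * a) (y + 2 ^ (r + 1) * b)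
      = normForm x y + 2 ^ (r + 1) *
          (a * y + b * x + 2 * (a * x + b * y + 2 ^ r * (a ^ 2 + a * b + b ^ 2))) := by
    unfold normForm; ring
  rw [h, e_add, e_two_pow_mul, pow_add, pow_mul, neg_one_sq, one_pow, mul_one]

noncomputable def normFormSum (r : ℕ) : ℂ :=
  ∑ x ∈ range (2 ^ r), ∑ y ∈ range (2 ^ r), e r (normForm x y)

lemma normFormSum_add_two (r : ℕ) : normFormSum (r + 2) = 4 * normFormSum r := by
  have hsigns : ∀ x y, e (r + 2) (normForm x y) + e (r + 2) (normForm x (y + 2 ^ (r + 1)))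
      + (e (r + 2) (normForm (x + 2 ^ (r + 1)) y)
        + e (r + 2) (normForm (x + 2 ^ (r + 1)) (y + 2 ^ (r + 1))))
      = e (r + 2) (normForm x y) * (1 + (-1) ^ y) * (1 + (-1) ^ x) := by
    intro x y
    have h10 := e_normForm_shift r x y 1 0
    have h01 := e_normForm_shift r x y 0 1
    have h11 := e_normForm_shift r x y 1 1
    simp only [mul_one, mul_zero, zero_mul, add_zero, zero_add, one_mul] at h10 h01 h11
    rw [h10, h01, h11, pow_add]
    ring
  have hfold : normFormSum (r + 2) = ∑ x ∈ range (2 * 2 ^ r), ∑ y ∈ range (2 * 2 ^ r),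
      e (r + 2) (normForm x y) * (1 + (-1) ^ y) * (1 + (-1) ^ x) := by
    rw [← pow_succ']
    simp only [normFormSum, pow_succ 2 (r + 1), mul_comm _ 2, sum_range_two_mul,
      ← sum_add_distrib, hsigns]
  have heven : ∀ a b, normForm (2 * a) (2 * b) = 4 * normForm a b := by
    intro a b; unfold normForm; ring
  rw [hfold, sum_sum_range_two_mul_mul_one_add_neg_one_pow]
  simp only [heven, e_four_mul, normFormSum]

theorem normFormSum_eq : ∀ r, normFormSum r = (-2) ^ r
  | 0 => by simp [normFormSum, e, normForm]
  | 1 => by norm_num [normFormSum, e_one, normForm, sum_range_succ]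
  | r + 2 => by rw [normFormSum_add_two, normFormSum_eq r]; ring

end EisensteinGaussSum

lemma qzExp_coe (a : ℚ) :
    qzExp (a : AddCircle (1 : ℚ)) = exp (2 * Real.pi * I * a) := by
  set b : ℚ := Quotient.out (a : AddCircle (1 : ℚ))
  have hba : ((b - a : ℚ) : AddCircle (1 : ℚ)) = 0 := by
    rw [AddCircle.coe_sub, sub_eq_zero]
    exact Quotient.out_eq _
  obtain ⟨n, hn⟩ := (AddCircle.coe_eq_zero_iff 1).mp hba
  have hb : (b : ℂ) = a + n := by
    rw [zsmul_one] at hn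
    exact_mod_cast eq_add_of_sub_eq' hn.symm
  rw [qzExp, hb, mul_add, exp_add, mul_comm _ (n : ℂ), exp_int_mul_two_pi_mul_I, mul_one]

theorem stmt10_general (r : ℕ)
    (q : ZMod (2 ^ r) × ZMod (2 ^ r) → AddCircle (1 : ℚ))
    (hq : ∀ x : ZMod (2 ^ r) × ZMod (2 ^ r),
      q x = ((((x.1.val : ℚ) ^ 2 + (x.1.val : ℚ) * (x.2.val : ℚ) + (x.2.val : ℚ) ^ 2) / 2 ^ r : ℚ) :
        AddCircle (1 : ℚ))) :
    gSum (ZMod (2 ^ r) × ZMod (2 ^ r)) q = (-1 : ℂ) ^ r := by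
  have hterm : ∀ x,
      qzExp (q x) = EisensteinGaussSum.e r (EisensteinGaussSum.normForm x.1.val x.2.val) := by
    intro x
    rw [hq x, qzExp_coe, EisensteinGaussSum.e]
    push_cast [EisensteinGaussSum.normForm]
    rw [mul_div_assoc]
  have hsum : ∑ᶠ x, qzExp (q x) = EisensteinGaussSum.normFormSum r := by
    simp only [finsum_eq_sum_of_fintype, Fintype.sum_prod_type, hterm,
      EisensteinGaussSum.normFormSum, ← ZMod.sum_val_eq_sum_range]
  have hcard : Real.sqrt (Nat.card (ZMod (2 ^ r) × ZMod (2 ^ r))) = 2 ^ r := by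
    simp [Nat.card_eq_fintype_card, ZMod.card]
  rw [gSum, hsum, EisensteinGaussSum.normFormSum_eq, hcard, neg_pow]
  push_cast
  field_simp

/-- The Gauss sum of q(x₁,x₂) = (x₁² + x₁x₂ + x₂²)/2^r on (ℤ/2^rℤ)² is (−1)^r. -/
theorem stmt10 (r : ℕ) (hr : 0 < r)
    (q : ZMod (2 ^ r) × ZMod (2 ^ r) → AddCircle (1 : ℚ))
    (hq : ∀ x : ZMod (2 ^ r) × ZMod (2 ^ r),
      q x = ((((x.1.val : ℚ) ^ 2 + (x.1.val : ℚ) * (x.2.val : ℚ) + (x.2.val : ℚ) ^ 2) / 2 ^ r : ℚ) :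
        AddCircle (1 : ℚ))) :
    gSum (ZMod (2 ^ r) × ZMod (2 ^ r)) q = (-1 : ℂ) ^ r :=
  stmt10_general r q hq
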